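/- arXiv:1003.4647 — 6 statements merged into one kernel-verified Lean document; each statement's English description precedes it below -/
import Mathlib

section
/- Let Γ be a collection of subsets of Baire space (ℕ → ℕ) containing the clopen sets and closed under continuous preimages, countable unions, countable intersections, and projections (images under the projection (ℕ→ℕ)×(ℕ→ℕ) → (ℕ→ℕ)), and let Δ_Γ = Γ ∩ {complements of sets in Γ}. Then for any function f : (ℕ→ℕ) → (ℕ→ℕ), the following are equivalent: (i) the preimage under f of every set in Γ is in Γ; (ii) the preimage under f of every set in Δ_Γ is in Δ_Γ; (iii) the preimage under f of every set in Δ_Γ is in Γ (Δ_Γ-measurability); (iv) the graph of f, as a subset of the product space, belongs to Δ_Γ; (v) the graph of f belongs to Γ. -/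
/-!
For a σ-lattice Γ of sets, the self-dual part Δ_Γ is a σ-algebra, and Δ_Γ-measurability of `f`
is statement (ii). When Γ contains the clopen sets, the coordinate σ-algebra of Baire space lies
inside Δ_Γ, so the diagonal is Δ_Γ-measurable and the graph of a Δ_Γ-measurable map, the preimage
of the diagonal under `p ↦ (f p.1, p.2)`, lies in Δ_Γ. Conversely, if the graph lies in Γ then
`f ⁻¹' A` is the projection of `graph f ∩ Prod.snd ⁻¹' A`, which lies in Γ whenever `A` does.
-/

open MeasureTheory Set

structure IsSigmaLattice {α : Type*} (Γ : Set (Set α)) : Prop where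
  empty_mem : ∅ ∈ Γ
  univ_mem : univ ∈ Γ
  iUnion_mem : ∀ A : ℕ → Set α, (∀ n, A n ∈ Γ) → ⋃ n, A n ∈ Γ
  iInter_mem : ∀ A : ℕ → Set α, (∀ n, A n ∈ Γ) → ⋂ n, A n ∈ Γ

namespace IsSigmaLattice

variable {α β : Type*} {Γ : Set (Set α)} {Γ' : Set (Set β)}

theorem inter_mem (hΓ : IsSigmaLattice Γ) {A B : Set α} (hA : A ∈ Γ) (hB : B ∈ Γ) :
    A ∩ B ∈ Γ := by
  have hAB : A ∩ B = ⋂ n : ℕ, if n = 0 then A else B := by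
    ext x
    refine ⟨fun ⟨hxA, hxB⟩ => mem_iInter.2 fun n => ?_, fun hx => ⟨?_, ?_⟩⟩
    · split_ifs <;> assumption
    · simpa using mem_iInter.1 hx 0
    · simpa using mem_iInter.1 hx 1
  rw [hAB]
  exact hΓ.iInter_mem _ fun n => by split_ifs <;> assumption

abbrev selfDual (hΓ : IsSigmaLattice Γ) : MeasurableSpace α where
  MeasurableSet' A := A ∈ Γ ∧ Aᶜ ∈ Γ
  measurableSet_empty := ⟨hΓ.empty_mem, by simpa using hΓ.univ_mem⟩
  measurableSet_compl A hA := ⟨hA.2, by simpa using hA.1⟩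
  measurableSet_iUnion A hA :=
    ⟨hΓ.iUnion_mem A fun n => (hA n).1, by simpa using hΓ.iInter_mem _ fun n => (hA n).2⟩

theorem measurable_selfDual_of_preimage_mem (hΓ : IsSigmaLattice Γ) (hΓ' : IsSigmaLattice Γ')
    {g : α → β} (hg : ∀ A : Set β, A ∈ Γ' ∧ Aᶜ ∈ Γ' → g ⁻¹' A ∈ Γ) :
    Measurable[hΓ.selfDual, hΓ'.selfDual] g :=
  fun A hA => ⟨hg A hA, by simpa using hg Aᶜ ⟨hA.2, by simpa using hA.1⟩⟩

end IsSigmaLattice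

section Baire

variable {Γ : Set (Set (ℕ → ℕ))}

theorem pi_le_selfDual (hΓ : IsSigmaLattice Γ)
    (hclopen : ∀ A : Set (ℕ → ℕ), IsClopen A → A ∈ Γ) :
    MeasurableSpace.pi ≤ hΓ.selfDual := by
  refine iSup_le fun n s ⟨t, _, hts⟩ => ?_
  have hs : IsClopen s := hts ▸ (isClopen_discrete t).preimage (continuous_apply n)
  exact ⟨hclopen s hs, hclopen _ hs.compl⟩

theorem measurable_selfDual_comap_of_continuous (hΓ : IsSigmaLattice Γ)
    (e : ((ℕ → ℕ) × (ℕ → ℕ)) ≃ₜ (ℕ → ℕ))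
    (hcont : ∀ g : (ℕ → ℕ) → (ℕ → ℕ), Continuous g → ∀ A ∈ Γ, g ⁻¹' A ∈ Γ)
    {g : (ℕ → ℕ) × (ℕ → ℕ) → (ℕ → ℕ)} (hg : Continuous g) :
    Measurable[hΓ.selfDual.comap e, hΓ.selfDual] g := by
  have hge : Measurable[hΓ.selfDual, hΓ.selfDual] (g ∘ e.symm) :=
    hΓ.measurable_selfDual_of_preimage_mem hΓ fun A hA =>
      hcont _ (hg.comp e.symm.continuous) A hA.1
  simpa [Function.comp_def] using hge.comp (comap_measurable e)

theorem measurableSet_selfDual_image_graph (hΓ : IsSigmaLattice Γ)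
    (e : ((ℕ → ℕ) × (ℕ → ℕ)) ≃ₜ (ℕ → ℕ))
    (hclopen : ∀ A : Set (ℕ → ℕ), IsClopen A → A ∈ Γ)
    (hcont : ∀ g : (ℕ → ℕ) → (ℕ → ℕ), Continuous g → ∀ A ∈ Γ, g ⁻¹' A ∈ Γ)
    {f : (ℕ → ℕ) → (ℕ → ℕ)} (hf : Measurable[hΓ.selfDual, hΓ.selfDual] f) :
    MeasurableSet[hΓ.selfDual] (e '' {p | f p.1 = p.2}) := by
  have hpi := pi_le_selfDual hΓ hclopen
  have hfst := measurable_selfDual_comap_of_continuous hΓ e hcont continuous_fst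
  have hsnd := measurable_selfDual_comap_of_continuous hΓ e hcont continuous_snd
  obtain ⟨s, hs, hes⟩ : MeasurableSet[hΓ.selfDual.comap e] {p | f p.1 = p.2} :=
    measurableSet_eq_fun ((hf.comp hfst).mono le_rfl hpi) (hsnd.mono le_rfl hpi)
  rwa [← hes, e.image_preimage]

theorem preimage_mem_of_image_graph_mem (hΓ : IsSigmaLattice Γ)
    (e : ((ℕ → ℕ) × (ℕ → ℕ)) ≃ₜ (ℕ → ℕ))
    (hcont : ∀ g : (ℕ → ℕ) → (ℕ → ℕ), Continuous g → ∀ A ∈ Γ, g ⁻¹' A ∈ Γ)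
    (hproj : ∀ B : Set ((ℕ → ℕ) × (ℕ → ℕ)), e '' B ∈ Γ → {x | ∃ y, (x, y) ∈ B} ∈ Γ)
    {f : (ℕ → ℕ) → (ℕ → ℕ)} (hgraph : e '' {p | f p.1 = p.2} ∈ Γ)
    {A : Set (ℕ → ℕ)} (hA : A ∈ Γ) : f ⁻¹' A ∈ Γ := by
  have hsnd : e '' (Prod.snd ⁻¹' A) ∈ Γ := by
    rw [e.image_eq_preimage_symm]
    exact hcont _ (continuous_snd.comp e.symm.continuous) A hA
  have hproj_mem := hproj ({p | f p.1 = p.2} ∩ Prod.snd ⁻¹' A)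
    (by rw [image_inter e.injective]; exact hΓ.inter_mem hgraph hsnd)
  convert hproj_mem using 1
  ext x
  simp

end Baire

/-- Proposition 3.2: characterizations of Γ-functions for an existential pointclass Γ.
Baire space is `ℕ → ℕ`; the product is identified with Baire space via a homeomorphism `e`. -/
theorem stmt_0 (Γ : Set (Set (ℕ → ℕ)))
    (e : ((ℕ → ℕ) × (ℕ → ℕ)) ≃ₜ (ℕ → ℕ))
    (hclopen : ∀ A : Set (ℕ → ℕ), IsClopen A → A ∈ Γ)
    (hcont : ∀ g : (ℕ → ℕ) → (ℕ → ℕ), Continuous g → ∀ A ∈ Γ, g ⁻¹' A ∈ Γ)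
    (hunion : ∀ A : ℕ → Set (ℕ → ℕ), (∀ n, A n ∈ Γ) → (⋃ n, A n) ∈ Γ)
    (hinter : ∀ A : ℕ → Set (ℕ → ℕ), (∀ n, A n ∈ Γ) → (⋂ n, A n) ∈ Γ)
    (hproj : ∀ B : Set ((ℕ → ℕ) × (ℕ → ℕ)), e '' B ∈ Γ → {x | ∃ y, (x, y) ∈ B} ∈ Γ)
    (f : (ℕ → ℕ) → (ℕ → ℕ)) :
    List.TFAE
      [∀ A ∈ Γ, f ⁻¹' A ∈ Γ,
       ∀ A : Set (ℕ → ℕ), A ∈ Γ ∧ Aᶜ ∈ Γ → f ⁻¹' A ∈ Γ ∧ (f ⁻¹' A)ᶜ ∈ Γ,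
       ∀ A : Set (ℕ → ℕ), A ∈ Γ ∧ Aᶜ ∈ Γ → f ⁻¹' A ∈ Γ,
       e '' {p : (ℕ → ℕ) × (ℕ → ℕ) | f p.1 = p.2} ∈ Γ ∧
         (e '' {p : (ℕ → ℕ) × (ℕ → ℕ) | f p.1 = p.2})ᶜ ∈ Γ,
       e '' {p : (ℕ → ℕ) × (ℕ → ℕ) | f p.1 = p.2} ∈ Γ] := by
  have hΓ : IsSigmaLattice Γ :=
    ⟨hclopen _ isClopen_empty, hclopen _ isClopen_univ, hunion, hinter⟩
  tfae_have 1 → 3 := fun h A hA => h A hA.1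
  tfae_have 3 → 2 := hΓ.measurable_selfDual_of_preimage_mem hΓ
  tfae_have 2 → 4 := measurableSet_selfDual_image_graph hΓ e hclopen hcont
  tfae_have 4 → 5 := And.left
  tfae_have 5 → 1 := fun h A => preimage_mem_of_image_graph_mem hΓ e hcont hproj h
  tfae_finish
end

section
/- There is no flip-set with the Baire property: if F ⊆ (ℕ → Bool) satisfies that whenever z, w ∈ ℕ → Bool differ in exactly one coordinate then (z ∈ F ↔ w ∉ F), and F has the Baire property in Cantor space, then this leads to a contradiction. Equivalently, every flip-set fails to have the Baire property. -/
/-!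
Flipping coordinate `n` is a homeomorphism of Cantor space that exchanges a flip-set `F` with
its complement. If `F` differed from an open set `U` by a meagre set, then either `U = ∅`, or
`U` contains a nonempty basic open set `C` fixed by the flip at a coordinate it does not
constrain. In both cases `C \ F` is meagre (with `C = univ` when `U = ∅`), hence so is its
image `C ∩ F` under the flip, so the nonempty open set `C` would be meagre.
-/

open Set Function

theorem not_isMeagre_diff_of_preimage_eq_compl {X : Type*} [TopologicalSpace X] [BaireSpace X]
    (e : X ≃ₜ X) {F C : Set X} (heF : e ⁻¹' F = Fᶜ) (heC : e ⁻¹' C = C) (hC : IsOpen C)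
    (hCne : C.Nonempty) : ¬ IsMeagre (C \ F) := by
  intro hCF
  have hCFc : IsMeagre (C \ Fᶜ) := by
    simpa only [preimage_sdiff, heC, heF] using
      hCF.preimage_of_isOpenMap e.continuous e.isOpenMap
  refine not_isMeagre_of_isOpen hC hCne ((hCF.union hCFc).mono fun x hx => ?_)
  by_cases hxF : x ∈ F
  · exact Or.inr ⟨hx, not_not_intro hxF⟩
  · exact Or.inl ⟨hx, hxF⟩

section FlipAt

variable {ι : Type*} [DecidableEq ι]

def flipAt (n : ι) : (ι → Bool) ≃ₜ (ι → Bool) where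
  toFun x := update x n (!x n)
  invFun x := update x n (!x n)
  left_inv x := by simp
  right_inv x := by simp
  continuous_toFun := by fun_prop
  continuous_invFun := by fun_prop

theorem flipAt_apply_of_ne {n i : ι} (h : i ≠ n) (x : ι → Bool) : flipAt n x i = x i :=
  update_of_ne h _ x

theorem existsUnique_ne_flipAt (n : ι) (x : ι → Bool) : ∃! i, x i ≠ flipAt n x i :=
  ⟨n, by simp [flipAt], fun i hi => not_imp_comm.mp (fun h => (flipAt_apply_of_ne h x).symm) hi⟩

theorem preimage_flipAt_eq_compl {F : Set (ι → Bool)}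
    (hflip : ∀ z w : ι → Bool, (∃! n, z n ≠ w n) → (z ∈ F ↔ w ∉ F)) (n : ι) :
    flipAt n ⁻¹' F = Fᶜ := by
  ext x
  rw [mem_preimage, mem_compl_iff, hflip x _ (existsUnique_ne_flipAt n x), not_not]

theorem IsOpen.exists_subset_preimage_flipAt_eq [Infinite ι] {U : Set (ι → Bool)}
    (hU : IsOpen U) (hne : U.Nonempty) :
    ∃ C ⊆ U, IsOpen C ∧ C.Nonempty ∧ ∃ n, flipAt n ⁻¹' C = C := by
  obtain ⟨y, hy⟩ := hne
  obtain ⟨I, u, hu, hIU⟩ := isOpen_pi_iff.mp hU y hy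
  obtain ⟨n, hn⟩ := Infinite.exists_notMem_finset I
  refine ⟨(I : Set ι).pi fun i => {y i}, fun x hx => hIU fun i hi => ?_,
    isOpen_set_pi I.finite_toSet fun _ _ => isOpen_discrete _, ⟨y, fun _ _ => rfl⟩, n, ?_⟩
  · rw [eq_of_mem_singleton (hx i hi)]
    exact (hu i hi).2
  · ext x
    simp only [mem_preimage, mem_pi, mem_singleton_iff]
    refine forall₂_congr fun i hi => ?_
    rw [flipAt_apply_of_ne (ne_of_mem_of_not_mem hi hn)]

end FlipAt

/-- No flip-set has the Baire property: if `F ⊆ ℕ → Bool` flips membership whenever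
two points differ in exactly one coordinate, then `F` does not differ from an open
set by a meager set. -/
theorem stmt_3 (F : Set (ℕ → Bool))
    (hflip : ∀ z w : ℕ → Bool, (∃! n : ℕ, z n ≠ w n) → (z ∈ F ↔ w ∉ F)) :
    ¬ ∃ U : Set (ℕ → Bool), IsOpen U ∧ IsMeagre (symmDiff F U) := by
  rintro ⟨U, hU, hM⟩
  have hpre := preimage_flipAt_eq_compl hflip
  rcases U.eq_empty_or_nonempty with rfl | hne
  · have hF : IsMeagre F := symmDiff_bot (a := F) ▸ hM
    refine not_isMeagre_diff_of_preimage_eq_compl (flipAt 0) (hpre 0) preimage_univ isOpen_univ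
      univ_nonempty ?_
    rw [← compl_eq_univ_sdiff, ← hpre 0]
    exact hF.preimage_of_isOpenMap (flipAt 0).continuous (flipAt 0).isOpenMap
  · obtain ⟨C, hCU, hC, hCne, n, hnC⟩ := hU.exists_subset_preimage_flipAt_eq hne
    exact not_isMeagre_diff_of_preimage_eq_compl (flipAt n) (hpre n) hnC hC hCne
      (hM.mono fun x hx => Or.inr ⟨hCU hx.1, hx.2⟩)
end

section
/- Let Γ be a pointclass of subsets of Baire space closed under finite unions and finite intersections, and suppose every set in Γ admits a Γ-norm. Then Γ has the reduction property: for all A, B ∈ Γ there exist A* ⊆ A and B* ⊆ B with A*, B* ∈ Γ, A* ∪ B* = A ∪ B, and A* ∩ B* = ∅. -/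
/-- A normed pointclass closed under finite unions and intersections (and continuous
preimages) has the reduction property.  A Γ-norm on `P` is a norm `φ` together with
relations `≤^φ_Γ ∈ Γ` and `≤^φ_Γ̌ ∈ Γ̌` (on the product, identified with Baire space
via `e`) agreeing with `x ∈ P ∧ φ(x) ≤ φ(y)` for `y ∈ P`. -/
theorem stmt_6 (Γ : Set (Set (ℕ → ℕ)))
    (e : ((ℕ → ℕ) × (ℕ → ℕ)) ≃ₜ (ℕ → ℕ))
    (hcont : ∀ g : (ℕ → ℕ) → (ℕ → ℕ), Continuous g → ∀ A ∈ Γ, g ⁻¹' A ∈ Γ)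
    (hunion : ∀ A ∈ Γ, ∀ B ∈ Γ, A ∪ B ∈ Γ)
    (hinter : ∀ A ∈ Γ, ∀ B ∈ Γ, A ∩ B ∈ Γ)
    (hnormed : ∀ P ∈ Γ, ∃ (φ : (ℕ → ℕ) → Ordinal)
      (LG LD : Set ((ℕ → ℕ) × (ℕ → ℕ))),
        e '' LG ∈ Γ ∧ (e '' LD)ᶜ ∈ Γ ∧
        ∀ y ∈ P, ∀ x : ℕ → ℕ,
          ((x ∈ P ∧ φ x ≤ φ y) ↔ (x, y) ∈ LG) ∧
          ((x ∈ P ∧ φ x ≤ φ y) ↔ (x, y) ∈ LD)) :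
    ∀ A ∈ Γ, ∀ B ∈ Γ, ∃ A' B' : Set (ℕ → ℕ),
      A' ∈ Γ ∧ B' ∈ Γ ∧ A' ⊆ A ∧ B' ⊆ B ∧
      A' ∪ B' = A ∪ B ∧ A' ∩ B' = ∅ := by
  classical
  -- auxiliary: if `univ ∈ Γ`, then `∅ ∈ Γ`.
  have hempty : Set.univ ∈ Γ → (∅ : Set (ℕ → ℕ)) ∈ Γ := by
    intro huniv
    obtain ⟨φ, LG, LD, hLG, hLD, h⟩ := hnormed _ huniv
    by_cases hG : e '' LG = Set.univ
    · have hall : ∀ x y : (ℕ → ℕ), φ x ≤ φ y := by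
        intro x y
        have hmem : e (x, y) ∈ e '' LG := by rw [hG]; trivial
        rcases hmem with ⟨w, hw, hwe⟩
        have : w = (x, y) := e.injective hwe
        rw [this] at hw
        exact ((h y trivial x).1.mpr hw).2
      have hDall : e '' LD = Set.univ := by
        ext z
        simp only [Set.mem_univ, iff_true]
        refine ⟨e.symm z, ?_, e.apply_symm_apply z⟩
        exact (h _ trivial _).2.mp ⟨trivial, hall _ _⟩
      rw [hDall] at hLD
      simpa using hLD
    · obtain ⟨z, hz⟩ := (Set.ne_univ_iff_exists_notMem _).mp hG
      have heq : (∅ : Set (ℕ → ℕ)) = (fun _ => z) ⁻¹' (e '' LG) := by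
        ext x; simp [hz]
      rw [heq]; exact hcont _ continuous_const _ hLG
  intro A hA B hB
  by_cases hAu : A = Set.univ
  · have he : (∅ : Set (ℕ → ℕ)) ∈ Γ := hempty (hAu ▸ hA)
    exact ⟨A ∪ B, ∅, hunion _ hA _ hB, he, by simp [hAu], by simp, by simp, by simp⟩
  by_cases hBu : B = Set.univ
  · have he : (∅ : Set (ℕ → ℕ)) ∈ Γ := hempty (hBu ▸ hB)
    exact ⟨∅, A ∪ B, he, hunion _ hA _ hB, by simp, by simp [hBu], by simp, by simp⟩
  obtain ⟨s, hs⟩ := (Set.ne_univ_iff_exists_notMem _).mp hAu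
  obtain ⟨t, ht⟩ := (Set.ne_univ_iff_exists_notMem _).mp hBu
  -- the "tagged" join of A and B
  set P : Set (ℕ → ℕ) :=
    (fun z => (e.symm z).1) ⁻¹' A ∪ (fun z => (e.symm z).2) ⁻¹' B with hPdef
  have hP : P ∈ Γ :=
    hunion _ (hcont _ (continuous_fst.comp e.symm.continuous) _ hA)
      _ (hcont _ (continuous_snd.comp e.symm.continuous) _ hB)
  obtain ⟨φ, LG, LD, hLG, hLD, h⟩ := hnormed P hP
  set p : (ℕ → ℕ) → (ℕ → ℕ) := fun x => e (x, t) with hpdef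
  set q : (ℕ → ℕ) → (ℕ → ℕ) := fun x => e (s, x) with hqdef
  have hp : ∀ x, p x ∈ P ↔ x ∈ A := by
    intro x
    simp only [hPdef, hpdef, Set.mem_union, Set.mem_preimage,
      Homeomorph.symm_apply_apply]
    exact or_iff_left ht
  have hq : ∀ x, q x ∈ P ↔ x ∈ B := by
    intro x
    simp only [hPdef, hqdef, Set.mem_union, Set.mem_preimage,
      Homeomorph.symm_apply_apply]
    exact or_iff_right hs
  have cp : Continuous p := e.continuous.comp (continuous_id.prodMk continuous_const)
  have cq : Continuous q := e.continuous.comp (continuous_const.prodMk continuous_id)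
  have cpq : Continuous (fun x => e (p x, q x)) := e.continuous.comp (cp.prodMk cq)
  have cqp : Continuous (fun x => e (q x, p x)) := e.continuous.comp (cq.prodMk cp)
  set SG : Set (ℕ → ℕ) := (fun x => e (p x, q x)) ⁻¹' (e '' LG) with hSGdef
  set SD1 : Set (ℕ → ℕ) := (fun x => e (q x, p x)) ⁻¹' (e '' LD)ᶜ with hSD1def
  set SD2 : Set (ℕ → ℕ) := (fun x => e (p x, q x)) ⁻¹' (e '' LD)ᶜ with hSD2def
  have hSG : SG ∈ Γ := hcont _ cpq _ hLG
  have hSD1 : SD1 ∈ Γ := hcont _ cqp _ hLD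
  have hSD2 : SD2 ∈ Γ := hcont _ cpq _ hLD
  have memSG : ∀ x, x ∈ SG ↔ (p x, q x) ∈ LG := by
    intro x
    simp only [hSGdef, Set.mem_preimage]
    exact e.injective.mem_set_image
  have memSD1 : ∀ x, x ∈ SD1 ↔ (q x, p x) ∉ LD := by
    intro x
    simp only [hSD1def, Set.mem_preimage, Set.mem_compl_iff]
    exact not_congr e.injective.mem_set_image
  have memSD2 : ∀ x, x ∈ SD2 ↔ (p x, q x) ∉ LD := by
    intro x
    simp only [hSD2def, Set.mem_preimage, Set.mem_compl_iff]
    exact not_congr e.injective.mem_set_image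
  refine ⟨A ∩ (SD1 ∪ SG), B ∩ SD2,
    hinter _ hA _ (hunion _ hSD1 _ hSG), hinter _ hB _ hSD2,
    Set.inter_subset_left, Set.inter_subset_left, ?_, ?_⟩
  · apply Set.Subset.antisymm
    · exact Set.union_subset_union Set.inter_subset_left Set.inter_subset_left
    · intro x hx
      by_cases hxA : x ∈ A
      · have hpx : p x ∈ P := (hp x).mpr hxA
        by_cases h1 : x ∈ SD1 ∪ SG
        · exact Or.inl ⟨hxA, h1⟩
        · have hqLD : (q x, p x) ∈ LD := by
            by_contra hc
            exact h1 (Or.inl ((memSD1 x).mpr hc))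
          have hqP : q x ∈ P ∧ φ (q x) ≤ φ (p x) :=
            (h (p x) hpx (q x)).2.mpr hqLD
          have hxB : x ∈ B := (hq x).mp hqP.1
          refine Or.inr ⟨hxB, (memSD2 x).mpr ?_⟩
          intro hpd
          have hple : p x ∈ P ∧ φ (p x) ≤ φ (q x) :=
            (h (q x) hqP.1 (p x)).2.mpr hpd
          have hLGmem : (p x, q x) ∈ LG := (h (q x) hqP.1 (p x)).1.mp hple
          exact h1 (Or.inr ((memSG x).mpr hLGmem))
      · have hxB : x ∈ B := hx.resolve_left hxA
        have hqP : q x ∈ P := (hq x).mpr hxB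
        refine Or.inr ⟨hxB, (memSD2 x).mpr ?_⟩
        intro hpd
        exact hxA ((hp x).mp ((h (q x) hqP (p x)).2.mpr hpd).1)
  · ext x
    simp only [Set.mem_inter_iff, Set.mem_empty_iff_false, iff_false]
    rintro ⟨⟨hxA, h1⟩, hxB, h2⟩
    have hpx : p x ∈ P := (hp x).mpr hxA
    have hqx : q x ∈ P := (hq x).mpr hxB
    have hnle : ¬ (φ (p x) ≤ φ (q x)) := by
      intro hle
      exact (memSD2 x).mp h2 ((h (q x) hqx (p x)).2.mp ⟨hpx, hle⟩)
    rcases h1 with h1 | h1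
    · exact (memSD1 x).mp h1
        ((h (p x) hpx (q x)).2.mp ⟨hqx, le_of_not_ge hnle⟩)
    · exact hnle ((h (q x) hqx (p x)).1.mpr ((memSG x).mp h1)).2
end

section
/- Assume SLO^F (for all A, B ⊆ ℝ: A ≤_F B or B ≤_F ℝ\A) for a set of reductions F closed under composition containing the identity, and suppose F contains, for each clopen set, the indicator-style two-valued functions into the constant sequences 0̄, 1̄. If A ≤_F ℝ\A (A is F-selfdual) and B ≰_F A, then A <_F B, i.e., A ≤_F B and B ≰_F A. -/
/-- F-reducibility. -/
def LeF (F : Set ((ℕ → ℕ) → (ℕ → ℕ))) (A B : Set (ℕ → ℕ)) : Prop :=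
  ∃ f ∈ F, A = f ⁻¹' B

/-- Assuming SLO^F for a set of reductions F (closed under composition, containing
the identity and the two-valued functions associated to clopen sets):
if `A` is F-selfdual and `B ≰_F A`, then `A <_F B`. -/
theorem stmt_10 (F : Set ((ℕ → ℕ) → (ℕ → ℕ)))
    (hid : id ∈ F)
    (hcomp : ∀ f ∈ F, ∀ g ∈ F, f ∘ g ∈ F)
    (hconst : ∀ D : Set (ℕ → ℕ), IsClopen D →
      ∃ f ∈ F, (∀ x ∈ D, f x = fun _ => 0) ∧ (∀ x ∉ D, f x = fun _ => 1))
    (hslo : ∀ A B : Set (ℕ → ℕ), LeF F A B ∨ LeF F B Aᶜ)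
    (A B : Set (ℕ → ℕ))
    (hsd : LeF F A Aᶜ)
    (hBA : ¬ LeF F B A) :
    LeF F A B ∧ ¬ LeF F B A := by
  refine ⟨?_, hBA⟩
  rcases hslo A B with h | h
  · exact h
  · exfalso
    obtain ⟨g, hg, hBg⟩ := h
    obtain ⟨f, hf, hAf⟩ := hsd
    exact hBA ⟨f ∘ g, hcomp f hf g hg, by
      have : Aᶜ = f ⁻¹' A := by
        have := congrArg compl hAf
        simpa [Set.preimage_compl] using this
      rw [hBg, this, Set.preimage_preimage]; rfl⟩
end

section
/- Let F be a set of reductions with SLO^F and suppose F-degrees are considered. If A is F-selfdual (A ≤_F ℝ\A), A ∉ Δ_F, and there exists η with a partition ⟨D_ξ⟩_{ξ<η} of ℝ into Δ_F-sets such that A ∩ D_ξ <_F A for all ξ < η, and furthermore the 'join' lemma holds (if A ∩ D_ξ ≤_F B for all ξ then A ≤_F B), then for any F-selfdual B with A <_F B there exists C with A <_F C <_F B (no gaps after selfdual degrees among selfdual sets without an intermediate degree); specifically some ξ₀ satisfies A <_F B ∩ D'_{ξ₀} <_F B where ⟨D'_ξ⟩ is the decomposition of B. -/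
/-- Strict F-reducibility. -/
def LtF (F : Set ((ℕ → ℕ) → (ℕ → ℕ))) (A B : Set (ℕ → ℕ)) : Prop :=
  LeF F A B ∧ ¬ LeF F B A

/-- The characteristic set `Δ_F`. -/
def DeltaF (F : Set ((ℕ → ℕ) → (ℕ → ℕ))) : Set (Set (ℕ → ℕ)) :=
  {A | LeF F A {x | x 0 = 0}}

/-- After a selfdual degree there is no gap: if `A` is F-selfdual, `B` is F-selfdual
with `A <_F B`, and `B` admits a decomposition over a Δ_F-partition `⟨D'_ξ⟩_{ξ<η}`
(with `B ∩ D'_ξ <_F B`) satisfying the join lemma, then some piece gives an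
intermediate degree: `A <_F B ∩ D'_{ξ₀} <_F B`, hence `∃ C, A <_F C <_F B`. -/
theorem stmt_17 (F : Set ((ℕ → ℕ) → (ℕ → ℕ)))
    (hid : id ∈ F)
    (hcomp : ∀ f ∈ F, ∀ g ∈ F, f ∘ g ∈ F)
    (hslo : ∀ A B : Set (ℕ → ℕ), LeF F A B ∨ LeF F B Aᶜ)
    (A B : Set (ℕ → ℕ))
    (hAsd : LeF F A Aᶜ) (hAΔ : A ∉ DeltaF F)
    (hBsd : LeF F B Bᶜ)
    (hAB : LtF F A B)
    (η : Ordinal) (D' : Ordinal → Set (ℕ → ℕ))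
    (hD'Δ : ∀ ξ < η, D' ξ ∈ DeltaF F)
    (hD'disj : ∀ ξ < η, ∀ ζ < η, ξ ≠ ζ → Disjoint (D' ξ) (D' ζ))
    (hD'cover : (⋃ ξ < η, D' ξ) = Set.univ)
    (hdp : ∀ ξ < η, LtF F (B ∩ D' ξ) B)
    (hjoin : ∀ X Y : Set (ℕ → ℕ), (∀ ξ < η, LeF F (X ∩ D' ξ) Y) → LeF F X Y) :
    (∃ ξ₀, ξ₀ < η ∧ LtF F A (B ∩ D' ξ₀) ∧ LtF F (B ∩ D' ξ₀) B) ∧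
    (∃ C : Set (ℕ → ℕ), LtF F A C ∧ LtF F C B) := by
  have htrans : ∀ X Y Z : Set (ℕ → ℕ), LeF F X Y → LeF F Y Z → LeF F X Z := by
    rintro X Y Z ⟨f, hf, rfl⟩ ⟨g, hg, rfl⟩
    exact ⟨g ∘ f, hcomp g hg f hf, rfl⟩
  have hAc : LeF F Aᶜ A := by
    obtain ⟨f, hf, hA⟩ := hAsd
    refine ⟨f, hf, ?_⟩
    conv_lhs => rw [hA]
    rw [← Set.preimage_compl, compl_compl]
  have key : ∀ ξ < η, LeF F (B ∩ D' ξ) A ∨ LtF F A (B ∩ D' ξ) := by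
    intro ξ hξ
    rcases hslo A (B ∩ D' ξ) with h | h
    · by_cases hba : LeF F (B ∩ D' ξ) A
      · exact Or.inl hba
      · exact Or.inr ⟨h, hba⟩
    · exact Or.inl (htrans _ _ _ h hAc)
  by_cases hall : ∀ ξ < η, LeF F (B ∩ D' ξ) A
  · exact absurd (hjoin B A hall) hAB.2
  · push_neg at hall
    obtain ⟨ξ₀, hξ₀, hnle⟩ := hall
    have hlt : LtF F A (B ∩ D' ξ₀) := (key ξ₀ hξ₀).resolve_left hnle
    exact ⟨⟨ξ₀, hξ₀, hlt, hdp ξ₀ hξ₀⟩, ⟨B ∩ D' ξ₀, hlt, hdp ξ₀ hξ₀⟩⟩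
end

section
/- Let ⟨D_ξ⟩_{ξ<η} be a partition of ℝ and suppose C ⊆ ℝ satisfies: for each ξ < η, C ∩ D_ξ = C_ξ where C_ξ ≡_F A_ξ for given sets A_ξ, and the join principle holds (if all C_ξ ≤_F B then C ≤_F B). If additionally for every B, (∀ξ A_ξ ≤_F B) implies B is not strictly below the supremum-candidate A, and A_ξ <_F A for all ξ, then A ≤_F C and C ≤_F A and C is F-selfdual, provided SLO^F holds and each C_ξ <_F C. -/
/-- F-equivalence. -/
def EqF (F : Set ((ℕ → ℕ) → (ℕ → ℕ))) (A B : Set (ℕ → ℕ)) : Prop :=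
  LeF F A B ∧ LeF F B A

/-- Selfdual sets at limit levels of small cofinality: if `[A]_F` is limit of
cofinality `η` (encoded via the family `⟨A_ξ⟩_{ξ<η}`), `C` is built over a
partition `⟨D_ξ⟩_{ξ<η}` with `C ∩ D_ξ ≡_F A_ξ`, the join principle holds for the
partition, SLO^F holds, and each `C ∩ D_ξ <_F C`, then `C ≡_F A` and `C` is
F-selfdual. -/
theorem stmt_18 (F : Set ((ℕ → ℕ) → (ℕ → ℕ)))
    (hid : id ∈ F)
    (hcomp : ∀ f ∈ F, ∀ g ∈ F, f ∘ g ∈ F)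
    (hslo : ∀ A B : Set (ℕ → ℕ), LeF F A B ∨ LeF F B Aᶜ)
    (η : Ordinal) (D : Ordinal → Set (ℕ → ℕ))
    (hDdisj : ∀ ξ < η, ∀ ζ < η, ξ ≠ ζ → Disjoint (D ξ) (D ζ))
    (hDcover : (⋃ ξ < η, D ξ) = Set.univ)
    (A C : Set (ℕ → ℕ)) (As : Ordinal → Set (ℕ → ℕ))
    (hCξ : ∀ ξ < η, EqF F (C ∩ D ξ) (As ξ))
    (hjoin : ∀ X B : Set (ℕ → ℕ), (∀ ξ < η, LeF F (X ∩ D ξ) B) → LeF F X B)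
    (hlim1 : ∀ ξ < η, LtF F (As ξ) A)
    (hlim2 : ∀ B : Set (ℕ → ℕ), (∀ ξ < η, LeF F (As ξ) B) → ¬ LtF F B A)
    (hCξlt : ∀ ξ < η, LtF F (C ∩ D ξ) C) :
    LeF F A C ∧ LeF F C A ∧ LeF F C Cᶜ := by
  have htrans : ∀ X Y Z : Set (ℕ → ℕ), LeF F X Y → LeF F Y Z → LeF F X Z := by
    rintro X Y Z ⟨f, hf, rfl⟩ ⟨g, hg, rfl⟩
    exact ⟨g ∘ f, hcomp g hg f hf, rfl⟩
  -- C ≤ A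
  have hCA : LeF F C A := by
    refine hjoin C A fun ξ hξ => htrans _ _ _ (hCξ ξ hξ).1 (hlim1 ξ hξ).1
  -- A ≤ C
  have hAC : LeF F A C := by
    have hAsC : ∀ ξ < η, LeF F (As ξ) C := fun ξ hξ =>
      htrans _ _ _ (hCξ ξ hξ).2 (hCξlt ξ hξ).1
    have := hlim2 C hAsC
    by_contra h
    exact this ⟨hCA, h⟩
  refine ⟨hAC, hCA, ?_⟩
  refine hjoin C Cᶜ fun ξ hξ => ?_
  rcases hslo C (C ∩ D ξ) with h | h
  · exact absurd h (hCξlt ξ hξ).2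
  · exact h
end
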